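/- arXiv:2105.08292 — 8 statements merged into one kernel-verified Lean document; each statement's English description precedes it below -/
import Mathlib

section
/- For any function g from a finite set V to the nonnegative reals and any probability distribution D on V, the second moment satisfies E[g(x)^2] ≤ 2 · (max_{x∈V} g(x)·Pr_{y∼D}(g(y) ≥ g(x))) · (max_{x∈V} g(x)). -/
open scoped Classical
open Finset

lemma key_abel (p g : ℕ → ℝ) (M : ℝ) (N : ℕ)
    (hp : ∀ i, 0 ≤ p i) (hg : ∀ i, 0 ≤ g i)
    (hmono : ∀ i j, i ≤ j → j < N → g i ≤ g j)
    (hM : ∀ i, i < N → g i * (∑ j ∈ Finset.Ico i N, p j) ≤ M)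
    (hMnn : 0 ≤ M) :
    ∀ n, 0 < n → n ≤ N →
      ∑ i ∈ Finset.range n, p i * g i ^ 2
        + (∑ j ∈ Finset.Ico n N, p j) * g (n-1) ^ 2
        ≤ M * g 0 + 2*M*(g (n-1) - g 0) := by
  intro n
  induction n with
  | zero => intro h; exact absurd h (lt_irrefl 0)
  | succ n ih =>
    intro _ hnN
    rcases Nat.eq_zero_or_pos n with rfl | hn
    · have h0N : 0 < N := by omega
      have h01 : (∑ j ∈ Finset.Ico 0 N, p j) = p 0 + ∑ j ∈ Finset.Ico 1 N, p j :=
        Finset.sum_eq_sum_Ico_succ_bot h0N p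
      have hM0 := hM 0 h0N
      have heq : p 0 * g 0 ^ 2 + (∑ j ∈ Finset.Ico 1 N, p j) * g 0 ^ 2
          = g 0 * (g 0 * (∑ j ∈ Finset.Ico 0 N, p j)) := by
        rw [h01]; ring
      have hle : g 0 * (g 0 * (∑ j ∈ Finset.Ico 0 N, p j)) ≤ g 0 * M :=
        mul_le_mul_of_nonneg_left hM0 (hg 0)
      norm_num [Finset.sum_range_one]
      linarith [heq, hle]
    · have hnlt : n < N := by omega
      have IH := ih hn (le_of_lt hnlt)
      have hsplit : (∑ j ∈ Finset.Ico n N, p j)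
          = p n + ∑ j ∈ Finset.Ico (n+1) N, p j :=
        Finset.sum_eq_sum_Ico_succ_bot hnlt p
      have hsum : ∑ i ∈ Finset.range (n+1), p i * g i ^ 2
          = ∑ i ∈ Finset.range n, p i * g i ^ 2 + p n * g n ^ 2 :=
        Finset.sum_range_succ _ n
      have hT : 0 ≤ ∑ j ∈ Finset.Ico n N, p j :=
        Finset.sum_nonneg fun j _ => hp j
      have hgm : g (n-1) ≤ g n := hmono (n-1) n (by omega) hnlt
      have hMn := hM n hnlt
      have hstep : (∑ j ∈ Finset.Ico n N, p j) * (g n ^ 2 - g (n-1) ^ 2)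
          ≤ 2 * M * (g n - g (n-1)) := by
        have h1 : (∑ j ∈ Finset.Ico n N, p j) * (g n + g (n-1))
            ≤ 2 * M := by
          nlinarith [hg n, hg (n-1)]
        nlinarith [hg n, hg (n-1)]
      have hn1 : n + 1 - 1 = n := by omega
      rw [hsum, hn1]
      have hexp : (∑ j ∈ Finset.Ico n N, p j) * (g n ^ 2 - g (n-1) ^ 2)
          = (∑ j ∈ Finset.Ico n N, p j) * g n ^ 2
            - (∑ j ∈ Finset.Ico n N, p j) * g (n-1) ^ 2 := by ring
      have hcomb : (∑ j ∈ Finset.Ico n N, p j) * g n ^ 2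
          = p n * g n ^ 2 + (∑ j ∈ Finset.Ico (n+1) N, p j) * g n ^ 2 := by
        rw [hsplit]; ring
      linarith [IH, hstep, hexp, hcomb]

/-- For any nonnegative `g` on a finite set `V` with probability
distribution `p`, the second moment satisfies
`E[g(x)^2] ≤ 2 · (max_x g(x)·Pr_{y∼D}(g(y) ≥ g(x))) · (max_x g(x))`. -/
theorem second_moment_le {V : Type*} [Fintype V] [Nonempty V] (p g : V → ℝ)
    (hp : ∀ x, 0 ≤ p x) (hsum : ∑ x, p x = 1) (hg : ∀ x, 0 ≤ g x) :
    ∑ x, p x * (g x) ^ 2 ≤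
      2 * (univ.sup' univ_nonempty
            (fun x => g x * ∑ y ∈ univ.filter (fun y => g x ≤ g y), p y)) *
        (univ.sup' univ_nonempty g) := by
  classical
  set M := univ.sup' univ_nonempty
      (fun x => g x * ∑ y ∈ univ.filter (fun y => g x ≤ g y), p y) with hMdef
  set G := univ.sup' univ_nonempty g with hGdef
  set N := Fintype.card V with hNdef
  have hN : 0 < N := Fintype.card_pos
  set e : Fin N ≃ V := (Tuple.sort (g ∘ (Fintype.equivFin V).symm)).trans
      (Fintype.equivFin V).symm with hedef
  have hmonoe : Monotone fun i => g (e i) :=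
    Tuple.monotone_sort (g ∘ (Fintype.equivFin V).symm)
  set p' : ℕ → ℝ := fun i => if h : i < N then p (e ⟨i, h⟩) else 0 with hp'def
  set g' : ℕ → ℝ := fun i => if h : i < N then g (e ⟨i, h⟩) else 0 with hg'def
  have hp' : ∀ i, 0 ≤ p' i := by
    intro i; simp only [hp'def]; split; exacts [hp _, le_rfl]
  have hg' : ∀ i, 0 ≤ g' i := by
    intro i; simp only [hg'def]; split; exacts [hg _, le_rfl]
  have hg'eq : ∀ i (h : i < N), g' i = g (e ⟨i, h⟩) := by
    intro i h; simp only [hg'def, dif_pos h]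
  have hp'eq : ∀ i (h : i < N), p' i = p (e ⟨i, h⟩) := by
    intro i h; simp only [hp'def, dif_pos h]
  have hmono' : ∀ i j, i ≤ j → j < N → g' i ≤ g' j := by
    intro i j hij hjN
    have hiN : i < N := lt_of_le_of_lt hij hjN
    rw [hg'eq i hiN, hg'eq j hjN]
    exact hmonoe (by exact_mod_cast hij : (⟨i, hiN⟩ : Fin N) ≤ ⟨j, hjN⟩)
  have hMnn : 0 ≤ M := by
    obtain ⟨x0⟩ := (inferInstance : Nonempty V)
    refine le_trans ?_ (Finset.le_sup' _ (Finset.mem_univ x0))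
    exact mul_nonneg (hg x0) (Finset.sum_nonneg fun y _ => hp y)
  have hGnn : ∀ x : V, g x ≤ G := fun x => Finset.le_sup' _ (Finset.mem_univ x)
  -- the tail bound
  have hM' : ∀ i, i < N → g' i * (∑ j ∈ Finset.Ico i N, p' j) ≤ M := by
    intro i hiN
    set x : V := e ⟨i, hiN⟩ with hxdef
    have htail : (∑ j ∈ Finset.Ico i N, p' j)
        ≤ ∑ y ∈ univ.filter (fun y => g x ≤ g y), p y := by
      have h1 : (∑ j ∈ Finset.Ico i N, p' j)
          = ∑ j ∈ (Finset.Ico i N).attach, p (e ⟨j.1, (Finset.mem_Ico.mp j.2).2⟩) := by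
        rw [← Finset.sum_attach (Finset.Ico i N) p']
        refine Finset.sum_congr rfl fun j _ => ?_
        exact hp'eq j.1 (Finset.mem_Ico.mp j.2).2
      have hinj : Set.InjOn (fun j : {j // j ∈ Finset.Ico i N} =>
          e ⟨j.1, (Finset.mem_Ico.mp j.2).2⟩) (Finset.Ico i N).attach := by
        intro a _ b _ hab
        have := e.injective hab
        exact Subtype.ext (by simpa [Fin.mk.injEq] using this)
      have h2 : ∑ j ∈ (Finset.Ico i N).attach, p (e ⟨j.1, (Finset.mem_Ico.mp j.2).2⟩)
          = ∑ y ∈ (Finset.Ico i N).attach.image (fun j =>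
              e ⟨j.1, (Finset.mem_Ico.mp j.2).2⟩), p y :=
        (Finset.sum_image hinj).symm
      rw [h1, h2]
      refine Finset.sum_le_sum_of_subset_of_nonneg ?_ (fun y _ _ => hp y)
      intro y hy
      obtain ⟨j, hj, rfl⟩ := Finset.mem_image.mp hy
      refine Finset.mem_filter.mpr ⟨Finset.mem_univ _, ?_⟩
      have hij : i ≤ j.1 := (Finset.mem_Ico.mp j.2).1
      exact hmonoe (by exact_mod_cast hij : (⟨i, hiN⟩ : Fin N) ≤ ⟨j.1, _⟩)
    calc g' i * (∑ j ∈ Finset.Ico i N, p' j)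
        ≤ g x * ∑ y ∈ univ.filter (fun y => g x ≤ g y), p y := by
          rw [hg'eq i hiN]
          exact mul_le_mul_of_nonneg_left htail (hg x)
      _ ≤ M := by
          rw [hMdef]
          exact Finset.le_sup' (fun x => g x * ∑ y ∈ univ.filter (fun y => g x ≤ g y), p y)
            (Finset.mem_univ x)
  -- rewrite the sum
  have hsumeq : ∑ x, p x * (g x) ^ 2 = ∑ i ∈ Finset.range N, p' i * g' i ^ 2 := by
    rw [← Fin.sum_univ_eq_sum_range (fun i => p' i * g' i ^ 2) N]
    rw [← Equiv.sum_comp e (fun x => p x * g x ^ 2)]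
    refine Finset.sum_congr rfl fun i _ => ?_
    rw [hp'eq i.1 i.isLt, hg'eq i.1 i.isLt]
  have hkey := key_abel p' g' M N hp' hg' hmono' hM' hMnn N hN le_rfl
  rw [Finset.Ico_self, Finset.sum_empty, zero_mul, add_zero] at hkey
  have hGN : g' (N - 1) ≤ G := by
    rw [hg'eq (N-1) (by omega)]; exact hGnn _
  rw [hsumeq]
  nlinarith [hg' 0, hg' (N-1), hMnn, hGN, hkey]
end

section
/- Let k be a positive integer and X_1,…,X_k be i.i.d. real random variables on a finite probability space. Then for any n ≤ k, E[max_{i∈[n]} X_i] ≤ (n/k)·E[max_{i∈[k]} X_i] + E[second-highest of X_1,…,X_k], where second-highest denotes the second largest value among the k samples. -/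
open scoped Classical
open Finset

/-!
Let `g_i(v)` be `v_i` when coordinate `i` is the strict maximum of `v`, and `0` otherwise. For
nonnegative `v`, the maximum over a set `s` of coordinates is at most `secondMax v` plus
`∑_{i ∈ s} g_i(v)`: either the maximiser over `s` is the strict global maximum, or some other
coordinate is at least as large and the maximum over `s` is a pairwise minimum. Summing over all
coordinates, `∑_i g_i(v) ≤ max_i v_i`. By exchangeability every `g_i` has the same expectation
`c`, so `k c ≤ E[max]` while `E[max_s] ≤ E[secondMax] + #s c`.
-/

section Pointwise

variable {ι : Type*}

noncomputable def strictMaxValue (i : ι) (v : ι → ℝ) : ℝ :=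
  if ∀ j, j ≠ i → v j < v i then v i else 0

noncomputable def secondMax (v : ι → ℝ) : ℝ :=
  sSup {x : ℝ | ∃ i j : ι, i ≠ j ∧ x = min (v i) (v j)}

variable {i j : ι} {v : ι → ℝ}

theorem strictMaxValue_of_forall_lt (h : ∀ j, j ≠ i → v j < v i) : strictMaxValue i v = v i :=
  if_pos h

theorem strictMaxValue_eq_zero_of_le (hji : j ≠ i) (h : v i ≤ v j) : strictMaxValue i v = 0 :=
  if_neg fun hlt => (hlt j hji).not_ge h

theorem strictMaxValue_nonneg (hv : 0 ≤ v i) : 0 ≤ strictMaxValue i v := by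
  unfold strictMaxValue
  split_ifs <;> simp [hv]

theorem strictMaxValue_le (hv : 0 ≤ v i) : strictMaxValue i v ≤ v i := by
  unfold strictMaxValue
  split_ifs <;> simp [hv]

theorem strictMaxValue_comp_perm (σ : Equiv.Perm ι) :
    strictMaxValue i (v ∘ σ) = strictMaxValue (σ i) v := by
  unfold strictMaxValue
  congr 1
  conv_rhs => rw [σ.surjective.forall]
  simp only [Function.comp_apply, σ.injective.ne_iff]

theorem secondMax_nonneg (hv : 0 ≤ v) : 0 ≤ secondMax v :=
  Real.sSup_nonneg <| by
    rintro x ⟨i, j, -, rfl⟩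
    exact le_min (hv i) (hv j)

theorem le_secondMax_of_le [Finite ι] (hij : i ≠ j) (h : v i ≤ v j) : v i ≤ secondMax v := by
  have hfin : {x : ℝ | ∃ i j : ι, i ≠ j ∧ x = min (v i) (v j)}.Finite :=
    (Set.finite_range fun p : ι × ι => min (v p.1) (v p.2)).subset
      fun x ⟨i, j, _, hx⟩ => ⟨(i, j), hx.symm⟩
  exact le_csSup hfin.bddAbove ⟨i, j, hij, (min_eq_left h).symm⟩

theorem sum_strictMaxValue_le_sup' [Fintype ι] (hne : (univ : Finset ι).Nonempty) (hv : 0 ≤ v) :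
    ∑ i, strictMaxValue i v ≤ univ.sup' hne v := by
  obtain ⟨b, -, hb⟩ := exists_max_image univ v hne
  rw [sum_eq_single b (fun i _ hib => strictMaxValue_eq_zero_of_le hib.symm (hb i (mem_univ i)))
    (by simp)]
  exact (strictMaxValue_le (hv b)).trans (le_sup' v (mem_univ b))

theorem sup'_le_secondMax_add_sum_strictMaxValue [Finite ι] (s : Finset ι) (hs : s.Nonempty)
    (hv : 0 ≤ v) : s.sup' hs v ≤ secondMax v + ∑ i ∈ s, strictMaxValue i v := by
  obtain ⟨b, hbs, hb⟩ := exists_mem_eq_sup' hs v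
  have hsum_nonneg : 0 ≤ ∑ i ∈ s, strictMaxValue i v :=
    sum_nonneg fun i _ => strictMaxValue_nonneg (hv i)
  rw [hb]
  by_cases hstrict : ∀ j, j ≠ b → v j < v b
  · have hbg : v b ≤ ∑ i ∈ s, strictMaxValue i v :=
      strictMaxValue_of_forall_lt hstrict ▸
        single_le_sum (fun i _ => strictMaxValue_nonneg (hv i)) hbs
    linarith [secondMax_nonneg hv]
  · push Not at hstrict
    obtain ⟨j, hjb, hbj⟩ := hstrict
    linarith [le_secondMax_of_le (Ne.symm hjb) hbj]

end Pointwise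

section Expectation

variable {ι : Type*} [Fintype ι] [DecidableEq ι] (S : Finset ℝ) (q : ℝ → ℝ)

noncomputable def piExpect (f : (ι → ℝ) → ℝ) : ℝ :=
  ∑ v ∈ Fintype.piFinset (fun _ : ι => S), (∏ j, q (v j)) * f v

theorem piExpect_add (f g : (ι → ℝ) → ℝ) :
    piExpect S q (fun v => f v + g v) = piExpect S q f + piExpect S q g := by
  simp only [piExpect, mul_add, sum_add_distrib]

theorem piExpect_finset_sum {κ : Type*} (t : Finset κ) (f : κ → (ι → ℝ) → ℝ) :
    piExpect S q (fun v => ∑ i ∈ t, f i v) = ∑ i ∈ t, piExpect S q (f i) := by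
  simp only [piExpect, mul_sum]
  exact sum_comm

variable {S q}

theorem piExpect_mono (hq : ∀ x ∈ S, 0 ≤ q x) {f g : (ι → ℝ) → ℝ}
    (hfg : ∀ v, (∀ j, v j ∈ S) → f v ≤ g v) : piExpect S q f ≤ piExpect S q g := by
  refine sum_le_sum fun v hv => ?_
  rw [Fintype.mem_piFinset] at hv
  exact mul_le_mul_of_nonneg_left (hfg v hv) (prod_nonneg fun j _ => hq _ (hv j))

theorem piExpect_comp_perm (σ : Equiv.Perm ι) (f : (ι → ℝ) → ℝ) :
    piExpect S q (fun v => f (v ∘ σ)) = piExpect S q f := by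
  refine sum_nbij' (· ∘ σ) (· ∘ σ.symm) (fun v hv => by simp_all [Fintype.mem_piFinset])
    (fun v hv => by simp_all [Fintype.mem_piFinset]) (fun v _ => by ext; simp)
    (fun v _ => by ext; simp) fun v _ => ?_
  rw [← Equiv.prod_comp σ (fun j => q (v j))]
  rfl

theorem piExpect_strictMaxValue_eq (i j : ι) :
    piExpect S q (strictMaxValue i) = piExpect S q (strictMaxValue j) := by
  rw [← piExpect_comp_perm (Equiv.swap i j) (strictMaxValue j)]
  simp only [strictMaxValue_comp_perm, Equiv.swap_apply_right]

theorem piExpect_sup'_le (hS : ∀ x ∈ S, 0 ≤ x) (hq : ∀ x ∈ S, 0 ≤ q x) (s : Finset ι)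
    (hs : s.Nonempty) :
    piExpect S q (fun v => s.sup' hs v)
      ≤ (#s / Fintype.card ι : ℝ) * piExpect S q (fun v => univ.sup' (hs.mono (subset_univ s)) v)
        + piExpect S q (secondMax (ι := ι)) := by
  obtain ⟨i₀, -⟩ := id hs
  set c := piExpect S q (strictMaxValue i₀)
  have hsum (t : Finset ι) : piExpect S q (fun v => ∑ i ∈ t, strictMaxValue i v) = #t * c := by
    simp [piExpect_finset_sum, piExpect_strictMaxValue_eq _ i₀, c]
  have hnonneg (v : ι → ℝ) (hv : ∀ j, v j ∈ S) : 0 ≤ v := fun j => hS _ (hv j)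
  have hmax : Fintype.card ι * c ≤ piExpect S q (fun v => univ.sup' (hs.mono (subset_univ s)) v) :=
    (hsum univ).symm.trans_le <|
      piExpect_mono hq fun v hv => sum_strictMaxValue_le_sup' _ (hnonneg v hv)
  have hsub : piExpect S q (fun v => s.sup' hs v) ≤ piExpect S q (secondMax (ι := ι)) + #s * c := by
    rw [← hsum s, ← piExpect_add]
    exact piExpect_mono hq fun v hv => sup'_le_secondMax_add_sum_strictMaxValue s hs (hnonneg v hv)
  have hcard : (0 : ℝ) < Fintype.card ι := by exact_mod_cast Fintype.card_pos_iff.mpr ⟨i₀⟩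
  calc piExpect S q (fun v => s.sup' hs v)
      ≤ piExpect S q secondMax + #s * c := hsub
    _ = piExpect S q secondMax + #s / Fintype.card ι * (Fintype.card ι * c) := by
        field_simp
    _ ≤ piExpect S q secondMax
          + #s / Fintype.card ι * piExpect S q (fun v => univ.sup' (hs.mono (subset_univ s)) v) := by
        gcongr
    _ = _ := add_comm _ _

/-- For `k` i.i.d. nonnegative random variables (modeled as `k` i.i.d.
draws `v : Fin k → ℝ` from a distribution `q` on a finite set `S` of nonnegative reals)
and any `0 < n ≤ k`,
`E[max_{i∈[n]} v_i] ≤ (n/k)·E[max_{i∈[k]} v_i] + E[second-highest of v]`,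
where the second-highest is the largest value of `min (v i) (v j)` over pairs `i ≠ j`. -/
theorem expected_max_first_n_le (k n : ℕ) (hn : 0 < n) (hnk : n ≤ k)
    (S : Finset ℝ) (hSpos : ∀ x ∈ S, 0 ≤ x)
    (q : ℝ → ℝ) (hq : ∀ x ∈ S, 0 ≤ q x) :
    ∑ v ∈ Fintype.piFinset (fun _ : Fin k => S),
        (∏ j, q (v j)) *
          (((univ : Finset (Fin k)).filter (fun j : Fin k => j.val < n)).sup'
            (by refine ⟨⟨0, lt_of_lt_of_le hn hnk⟩, ?_⟩; simp [hn]) v)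
      ≤ ((n : ℝ) / (k : ℝ)) *
          ∑ v ∈ Fintype.piFinset (fun _ : Fin k => S),
            (∏ j, q (v j)) *
              ((univ : Finset (Fin k)).sup'
                (by exact ⟨⟨0, lt_of_lt_of_le hn hnk⟩, mem_univ _⟩) v)
        + ∑ v ∈ Fintype.piFinset (fun _ : Fin k => S),
            (∏ j, q (v j)) *
              sSup {x : ℝ | ∃ i j : Fin k, i ≠ j ∧ x = min (v i) (v j)} := by
  have hcard : #{j : Fin k | j.val < n} = n := by
    rw [Fin.card_filter_val_lt, min_eq_right hnk]
  have key := piExpect_sup'_le hSpos hq {j : Fin k | j.val < n}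
    ⟨⟨0, lt_of_lt_of_le hn hnk⟩, by simp [hn]⟩
  rwa [hcard, Fintype.card_fin] at key
end Expectation
end

section
/- The ironed virtual value function is monotone: for all x, x' in the finite support V_j of distribution D_j with x ≤ x', the ironed virtual value satisfies φ̃_j(x) ≤ φ̃_j(x'). -/
open scoped Classical
open Finset

/-- The `f`-weighted average of `φ` over the values of `V` in the interval `[y, x]`. -/
noncomputable def ironAvg (V : Finset ℝ) (f φ : ℝ → ℝ) (y x : ℝ) : ℝ :=
  (∑ y' ∈ V.filter (fun y' => y ≤ y' ∧ y' ≤ x), f y' * φ y') /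
    (∑ y' ∈ V.filter (fun y' => y ≤ y' ∧ y' ≤ x), f y')

/-- The largest `y ∈ V`, `y ≤ x`, maximizing the weighted average `ironAvg V f φ y x`
(ties broken toward larger values). -/
noncomputable def ironYstar (V : Finset ℝ) (f φ : ℝ → ℝ) (x : ℝ) : ℝ :=
  ((V.filter (fun y => y ≤ x ∧
      ∀ y' ∈ V, y' ≤ x → ironAvg V f φ y' x ≤ ironAvg V f φ y x)).max).unbotD 0

/-- The ironing procedure: starting from the top `x = max V`, find the maximizer
`y* = ironYstar V f φ x`, assign the weighted average `ironAvg V f φ y* x` on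
`[y*, x] ∩ V`, and recurse below `y*`.  The fuel `V.card` suffices for termination. -/
noncomputable def ironLoop (V : Finset ℝ) (f φ : ℝ → ℝ) : ℕ → ℝ → ℝ → ℝ
  | 0, _, _ => 0
  | fuel + 1, x, z =>
      if ironYstar V f φ x ≤ z then ironAvg V f φ (ironYstar V f φ x) x
      else ironLoop V f φ fuel
        (((V.filter (fun y => y < ironYstar V f φ x)).max).unbotD 0) z

/-- Myerson's (discrete) virtual value: `φ(x) = x` if `x = max V`, and otherwise
`φ(x) = x − (succ(x) − x)·(1 − F(x))/f(x)` where `succ(x)` is the smallest element of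
`V` above `x` and `1 − F(x) = Pr_{y ∼ f}(y > x)`. -/
noncomputable def virtVal (V : Finset ℝ) (f : ℝ → ℝ) (x : ℝ) : ℝ :=
  if h : (V.filter (fun y => x < y)).Nonempty then
    x - ((V.filter (fun y => x < y)).min' h - x) *
        (∑ y ∈ V.filter (fun y => x < y), f y) / f x
  else x

/-- The ironed virtual value `φ̃`, produced by running the ironing procedure on
Myerson's virtual value starting from the top `max V`. -/
noncomputable def ironedVirtVal (V : Finset ℝ) (f : ℝ → ℝ) (z : ℝ) : ℝ :=
  ironLoop V f (virtVal V f) V.card ((V.max).unbotD 0) z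

/-! The block `[y*, x]` chosen in a round of ironing has maximal average among all blocks
`[y, x]`. Any block `[y, x₁]` lying entirely below `y*` therefore has average at most that of
`[y*, x]`: the average of `[y, x]` is the mediant of the two, and a mediant exceeds its lower
term. So each later round assigns values no larger than the earlier ones, while within a round
the assigned value is constant. -/

lemma Finset.max_unbotD_eq_max' {α : Type*} [LinearOrder α] {s : Finset α} (hs : s.Nonempty)
    (d : α) : s.max.unbotD d = s.max' hs := by
  rw [← Finset.coe_max' hs]
  rfl

lemma div_le_div_of_add_div_add_le {K : Type*} [Field K] [LinearOrder K] [IsStrictOrderedRing K]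
    {a₁ a₂ w₁ w₂ : K} (hw₁ : 0 < w₁) (hw₂ : 0 < w₂)
    (h : (a₁ + a₂) / (w₁ + w₂) ≤ a₂ / w₂) : a₁ / w₁ ≤ a₂ / w₂ := by
  rw [div_le_div_iff₀ (by positivity) hw₂] at h
  rw [div_le_div_iff₀ hw₁ hw₂]
  nlinarith

lemma Finset.card_filter_le_lt_of_lt {α : Type*} [LinearOrder α] {V : Finset α} {a b : α}
    (hb : b ∈ V) (hab : a < b) :
    (V.filter (· ≤ a)).card < (V.filter (· ≤ b)).card := by
  refine Finset.card_lt_card ((Finset.ssubset_iff_of_subset ?_).2 ⟨b, ?_, ?_⟩)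
  · exact V.monotone_filter_right fun t _ ht => ht.trans hab.le
  · exact Finset.mem_filter.2 ⟨hb, le_rfl⟩
  · exact fun h => (Finset.mem_filter.1 h).2.not_gt hab

section Ironing

variable {V : Finset ℝ} {f φ : ℝ → ℝ}

lemma ironAvg_weight_pos (hf : ∀ x ∈ V, 0 < f x) {y x : ℝ} (hy : y ∈ V) (hyx : y ≤ x) :
    0 < ∑ t ∈ V.filter (fun t => y ≤ t ∧ t ≤ x), f t :=
  Finset.sum_pos (fun t ht => hf t (Finset.mem_filter.1 ht).1)
    ⟨y, Finset.mem_filter.2 ⟨hy, le_rfl, hyx⟩⟩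

/-- With no point of `V` strictly between `a` and `b`, the average over `[y, x]` is the mediant
of those over `[y, a]` and `[b, x]`. -/
lemma ironAvg_le_of_ironAvg_le (hf : ∀ x ∈ V, 0 < f x) {y a b x : ℝ}
    (hy : y ∈ V) (hb : b ∈ V) (hya : y ≤ a) (hab : a < b) (hbx : b ≤ x)
    (hgap : ∀ t ∈ V, t < b → t ≤ a) (h : ironAvg V f φ y x ≤ ironAvg V f φ b x) :
    ironAvg V f φ y a ≤ ironAvg V f φ b x := by
  have hsplit : V.filter (fun t => y ≤ t ∧ t ≤ x) =
      V.filter (fun t => y ≤ t ∧ t ≤ a) ∪ V.filter (fun t => b ≤ t ∧ t ≤ x) := by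
    ext t
    simp only [Finset.mem_union, Finset.mem_filter]
    constructor
    · rintro ⟨ht, hyt, htx⟩
      rcases lt_or_ge t b with htb | hbt
      · exact Or.inl ⟨ht, hyt, hgap t ht htb⟩
      · exact Or.inr ⟨ht, hbt, htx⟩
    · rintro (⟨ht, hyt, hta⟩ | ⟨ht, hbt, htx⟩)
      · exact ⟨ht, hyt, by linarith⟩
      · exact ⟨ht, by linarith, htx⟩
  have hdisj : Disjoint (V.filter (fun t => y ≤ t ∧ t ≤ a))
      (V.filter (fun t => b ≤ t ∧ t ≤ x)) :=
    Finset.disjoint_left.2 fun t ht₁ ht₂ => by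
      linarith [(Finset.mem_filter.1 ht₁).2.2, (Finset.mem_filter.1 ht₂).2.1]
  rw [ironAvg, hsplit, Finset.sum_union hdisj, Finset.sum_union hdisj] at h
  exact div_le_div_of_add_div_add_le (ironAvg_weight_pos hf hy hya)
    (ironAvg_weight_pos hf hb hbx) h

lemma ironYstar_spec {x : ℝ} (hx : x ∈ V) :
    ironYstar V f φ x ∈ V ∧ ironYstar V f φ x ≤ x ∧
      ∀ y ∈ V, y ≤ x → ironAvg V f φ y x ≤ ironAvg V f φ (ironYstar V f φ x) x := by
  obtain ⟨y₀, hy₀, hy₀max⟩ := Finset.exists_max_image (V.filter (· ≤ x))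
    (fun y => ironAvg V f φ y x) ⟨x, Finset.mem_filter.2 ⟨hx, le_rfl⟩⟩
  have hne : (V.filter (fun y => y ≤ x ∧
      ∀ y' ∈ V, y' ≤ x → ironAvg V f φ y' x ≤ ironAvg V f φ y x)).Nonempty :=
    ⟨y₀, Finset.mem_filter.2 ⟨(Finset.mem_filter.1 hy₀).1, (Finset.mem_filter.1 hy₀).2,
      fun y hy hyx => hy₀max y (Finset.mem_filter.2 ⟨hy, hyx⟩)⟩⟩
  rw [ironYstar, Finset.max_unbotD_eq_max' hne 0]
  simpa only [Finset.mem_filter, and_assoc] using Finset.max'_mem _ hne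

variable (V f φ) in
/-- The top of the next block, where `ironLoop` recurses. -/
noncomputable def ironNext (x : ℝ) : ℝ :=
  ((V.filter (· < ironYstar V f φ x)).max).unbotD 0

lemma ironLoop_succ (n : ℕ) (x z : ℝ) :
    ironLoop V f φ (n + 1) x z =
      if ironYstar V f φ x ≤ z then ironAvg V f φ (ironYstar V f φ x) x
      else ironLoop V f φ n (ironNext V f φ x) z :=
  rfl

lemma ironNext_spec {x z : ℝ} (hz : z ∈ V) (hzy : z < ironYstar V f φ x) :
    ironNext V f φ x ∈ V ∧ ironNext V f φ x < ironYstar V f φ x ∧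
      ∀ t ∈ V, t < ironYstar V f φ x → t ≤ ironNext V f φ x := by
  have hne : (V.filter (· < ironYstar V f φ x)).Nonempty := ⟨z, Finset.mem_filter.2 ⟨hz, hzy⟩⟩
  rw [ironNext, Finset.max_unbotD_eq_max' hne 0]
  obtain ⟨hmem, hlt⟩ := Finset.mem_filter.1 (Finset.max'_mem _ hne)
  exact ⟨hmem, hlt, fun t ht hty => Finset.le_max' _ t (Finset.mem_filter.2 ⟨ht, hty⟩)⟩

lemma ironAvg_le_ironAvg_ironYstar (hf : ∀ x ∈ V, 0 < f x) {x y : ℝ} (hx : x ∈ V) (hy : y ∈ V)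
    (hys : y < ironYstar V f φ x) (hyn : y ≤ ironNext V f φ x) :
    ironAvg V f φ y (ironNext V f φ x) ≤ ironAvg V f φ (ironYstar V f φ x) x := by
  obtain ⟨hsV, hsx, hsmax⟩ := ironYstar_spec (φ := φ) hx
  obtain ⟨-, hns, hgap⟩ := ironNext_spec hy hys
  exact ironAvg_le_of_ironAvg_le hf hy hsV hyn hns hsx hgap (hsmax y hy (hys.le.trans hsx))

lemma ironLoop_self {n : ℕ} {x : ℝ} (hx : x ∈ V) (hn : (V.filter (· ≤ x)).card ≤ n) :
    ironLoop V f φ n x x = ironAvg V f φ (ironYstar V f φ x) x := by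
  have hpos : 0 < (V.filter (· ≤ x)).card :=
    Finset.card_pos.2 ⟨x, Finset.mem_filter.2 ⟨hx, le_rfl⟩⟩
  obtain ⟨m, rfl⟩ := Nat.exists_eq_add_one.2 (hpos.trans_le hn)
  rw [ironLoop_succ, if_pos (ironYstar_spec hx).2.1]

/-- Taking `z' = x` gives the bound `ironLoop n x z ≤ ironLoop n x x` needed when `z` and `z'`
fall in different blocks, so a single induction on the fuel suffices. -/
lemma ironLoop_mono (hf : ∀ x ∈ V, 0 < f x) {n : ℕ} {x z z' : ℝ} (hx : x ∈ V) (hz : z ∈ V)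
    (hz' : z' ∈ V) (hzz' : z ≤ z') (hz'x : z' ≤ x) (hn : (V.filter (· ≤ x)).card ≤ n) :
    ironLoop V f φ n x z ≤ ironLoop V f φ n x z' := by
  induction n generalizing x z z' with
  | zero => rfl
  | succ n ih =>
    rw [ironLoop_succ, ironLoop_succ]
    by_cases hsz : ironYstar V f φ x ≤ z
    · rw [if_pos hsz, if_pos (hsz.trans hzz')]
    obtain ⟨hnV, hns, hgap⟩ := ironNext_spec hz (not_le.1 hsz)
    have hnx : ironNext V f φ x < x := hns.trans_le (ironYstar_spec hx).2.1
    have hcard : (V.filter (· ≤ ironNext V f φ x)).card ≤ n :=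
      Nat.lt_succ_iff.1 ((Finset.card_filter_le_lt_of_lt hx hnx).trans_le hn)
    have hzn : z ≤ ironNext V f φ x := hgap z hz (not_le.1 hsz)
    rw [if_neg hsz]
    by_cases hsz' : ironYstar V f φ x ≤ z'
    · rw [if_pos hsz']
      obtain ⟨hs'V, hs'n, -⟩ := ironYstar_spec (φ := φ) hnV
      calc ironLoop V f φ n (ironNext V f φ x) z
          ≤ ironLoop V f φ n (ironNext V f φ x) (ironNext V f φ x) :=
            ih hnV hz hnV hzn le_rfl hcard
        _ = ironAvg V f φ (ironYstar V f φ (ironNext V f φ x)) (ironNext V f φ x) :=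
            ironLoop_self hnV hcard
        _ ≤ ironAvg V f φ (ironYstar V f φ x) x :=
            ironAvg_le_ironAvg_ironYstar hf hx hs'V (hs'n.trans_lt hns) hs'n
    · rw [if_neg hsz']
      exact ih hnV hz hz' hzz' (hgap z' hz' (not_le.1 hsz')) hcard

end Ironing

theorem ironedVirtVal_monotone_general (V : Finset ℝ)
    (f : ℝ → ℝ) (hf : ∀ x ∈ V, 0 < f x) :
    ∀ x ∈ V, ∀ x' ∈ V, x ≤ x' → ironedVirtVal V f x ≤ ironedVirtVal V f x' := by
  intro x hx x' hx' hxx'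
  have hV : V.Nonempty := ⟨x, hx⟩
  rw [ironedVirtVal, ironedVirtVal, Finset.max_unbotD_eq_max' hV 0]
  exact ironLoop_mono hf (V.max'_mem hV) hx hx' hxx' (V.le_max' x' hx')
    (Finset.card_filter_le _ _)

/-- The ironed virtual value function is monotone: for all
`x ≤ x'` in the finite support `V` of the distribution `f`, `φ̃(x) ≤ φ̃(x')`. -/
theorem ironedVirtVal_monotone (V : Finset ℝ) (hV : V.Nonempty) (hVpos : ∀ x ∈ V, 0 ≤ x)
    (f : ℝ → ℝ) (hf : ∀ x ∈ V, 0 < f x) (hsum : ∑ x ∈ V, f x = 1) :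
    ∀ x ∈ V, ∀ x' ∈ V, x ≤ x' → ironedVirtVal V f x ≤ ironedVirtVal V f x' :=
  ironedVirtVal_monotone_general V f hf
end

section
/- In the ironing procedure, the interval averages are non-increasing: if in one iteration of the while loop the value assigned is a_1(y*_1) on interval [y*_1, x_1] and in the next iteration the value assigned is a_2(y*_2) on interval [y*_2, x_2] (with x_2 < y*_1), then a_2(y*_2) ≤ a_1(y*_1). -/
open scoped Classical
open Finset

/-- In the ironing procedure the interval averages are non-increasing:
if one iteration assigns the value `a₁(y₁*) = ironAvg V f φ y₁ x₁` (with `y₁` a maximizer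
of `ironAvg V f φ · x₁` over `{y ∈ V | y ≤ x₁}`), and the next iteration works below
`x₂` (the largest element of `V` strictly below `y₁`) and assigns
`a₂(y₂*) = ironAvg V f φ y₂ x₂` (with `y₂` a maximizer over `{y ∈ V | y ≤ x₂}`), then
`a₂(y₂*) ≤ a₁(y₁*)`. -/
theorem ironing_averages_nonincreasing (V : Finset ℝ) (f φ : ℝ → ℝ)
    (hf : ∀ y ∈ V, 0 < f y)
    (x₁ y₁ x₂ y₂ : ℝ) (hx₁ : x₁ ∈ V) (hy₁ : y₁ ∈ V) (hx₂ : x₂ ∈ V) (hy₂ : y₂ ∈ V)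
    (hy₁x₁ : y₁ ≤ x₁) (hx₂y₁ : x₂ < y₁) (hy₂x₂ : y₂ ≤ x₂)
    (hx₂top : ∀ z ∈ V, z < y₁ → z ≤ x₂)
    (hmax₁ : ∀ y ∈ V, y ≤ x₁ → ironAvg V f φ y x₁ ≤ ironAvg V f φ y₁ x₁)
    (hmax₂ : ∀ y ∈ V, y ≤ x₂ → ironAvg V f φ y x₂ ≤ ironAvg V f φ y₂ x₂) :
    ironAvg V f φ y₂ x₂ ≤ ironAvg V f φ y₁ x₁ := by
  set A := V.filter (fun z => y₂ ≤ z ∧ z ≤ x₂) with hA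
  set B := V.filter (fun z => y₁ ≤ z ∧ z ≤ x₁) with hB
  set S := V.filter (fun z => y₂ ≤ z ∧ z ≤ x₁) with hS
  have hdisj : Disjoint A B := by
    rw [Finset.disjoint_left]
    intro z hzA hzB
    simp only [hA, hB, Finset.mem_filter] at hzA hzB
    linarith [hzA.2.2, hzB.2.1]
  have hunion : S = A ∪ B := by
    ext z
    simp only [hS, hA, hB, Finset.mem_union, Finset.mem_filter]
    constructor
    · rintro ⟨hzV, hz1, hz2⟩
      rcases lt_or_ge z y₁ with h | h
      · exact Or.inl ⟨hzV, hz1, hx₂top z hzV h⟩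
      · exact Or.inr ⟨hzV, h, hz2⟩
    · rintro (⟨hzV, hz1, hz2⟩ | ⟨hzV, hz1, hz2⟩)
      · exact ⟨hzV, hz1, le_trans hz2 (le_trans hx₂y₁.le hy₁x₁)⟩
      · exact ⟨hzV, le_trans (le_trans hy₂x₂ hx₂y₁.le) hz1, hz2⟩
  have hfA : ∀ z ∈ A, 0 < f z := fun z hz => hf z (Finset.mem_filter.mp hz).1
  have hfB : ∀ z ∈ B, 0 < f z := fun z hz => hf z (Finset.mem_filter.mp hz).1
  have hAne : A.Nonempty := ⟨y₂, by simp [hA, hy₂, hy₂x₂]⟩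
  have hBne : B.Nonempty := ⟨y₁, by simp [hB, hy₁, hy₁x₁]⟩
  have hwA : 0 < ∑ z ∈ A, f z := Finset.sum_pos hfA hAne
  have hwB : 0 < ∑ z ∈ B, f z := Finset.sum_pos hfB hBne
  have hkey := hmax₁ y₂ hy₂ (le_trans hy₂x₂ (le_trans hx₂y₁.le hy₁x₁))
  have hSsum : ∑ z ∈ S, f z * φ z = (∑ z ∈ A, f z * φ z) + ∑ z ∈ B, f z * φ z := by
    rw [hunion, Finset.sum_union hdisj]
  have hSsum' : ∑ z ∈ S, f z = (∑ z ∈ A, f z) + ∑ z ∈ B, f z := by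
    rw [hunion, Finset.sum_union hdisj]
  unfold ironAvg at hkey ⊢
  simp only [← hA, ← hB, ← hS] at hkey ⊢
  rw [hSsum, hSsum'] at hkey
  rw [div_le_div_iff₀ hwA hwB]
  rw [div_le_div_iff₀ (by linarith) hwB] at hkey
  nlinarith [hkey]
end

section
/- Let U_1,…,U_m be independent nonnegative random variables on a finite probability space, and suppose there exist nonnegative reals r_1,…,r_m with r = Σ_j r_j such that for each j: (a) U_j ≤ r always, and (b) for every attainable value u of U_j, u·Pr(U_j ≥ u) ≤ r_j. Then Var(Σ_j U_j) ≤ 2r². -/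
/-!
Model the data as the product `Measure.pi` of the laws with weights `p j`. The coordinates
`U j` are then independent, so the variance of the sum is the sum of the variances, and each of
those is at most `𝔼[U j ^ 2]`. The tail condition bounds `𝔼[U j ^ 2]` by a discrete layer-cake
argument: raising the level from `u` to the smallest value `u'` of `U j` costs
`(u' ^ 2 - u ^ 2) Pr(U j ≥ u') ≤ 2 (u' - u) r j`, and these increments telescope up to
`max U j ≤ r`.
-/

open scoped Classical
open Finset MeasureTheory ProbabilityTheory

namespace PMF

noncomputable def ofFintypeReal {α : Type*} [Fintype α] (p : α → ℝ) (hp : ∀ a, 0 ≤ p a)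
    (hsum : ∑ a, p a = 1) : PMF α :=
  ofFintype (fun a => ENNReal.ofReal (p a)) <| by
    rw [← ENNReal.ofReal_sum_of_nonneg fun a _ => hp a, hsum, ENNReal.ofReal_one]

variable {α : Type*} [Fintype α] {p : α → ℝ} {hp : ∀ a, 0 ≤ p a} {hsum : ∑ a, p a = 1}

@[simp]
lemma toReal_ofFintypeReal_apply (a : α) : (ofFintypeReal p hp hsum a).toReal = p a := by
  simp [ofFintypeReal, hp a]

lemma integral_ofFintypeReal [MeasurableSpace α] [MeasurableSingletonClass α] (f : α → ℝ) :
    ∫ a, f a ∂(ofFintypeReal p hp hsum).toMeasure = ∑ a, p a * f a := by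
  simp [integral_eq_sum]

end PMF

lemma integral_pi_ofFintypeReal {ι : Type*} [Fintype ι] [DecidableEq ι] {Ω : ι → Type*}
    [∀ i, Fintype (Ω i)] [∀ i, MeasurableSpace (Ω i)] [∀ i, MeasurableSingletonClass (Ω i)]
    {p : ∀ i, Ω i → ℝ} {hp : ∀ i ω, 0 ≤ p i ω} {hsum : ∀ i, ∑ ω, p i ω = 1}
    (f : (∀ i, Ω i) → ℝ) :
    ∫ ω, f ω ∂Measure.pi (fun i => (PMF.ofFintypeReal (p i) (hp i) (hsum i)).toMeasure)
      = ∑ ω, (∏ i, p i (ω i)) * f ω := by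
  rw [integral_fintype .of_finite]
  refine sum_congr rfl fun ω _ => ?_
  simp [measureReal_def, ENNReal.toReal_prod]

theorem sum_mul_sq_sub_sq_le_of_tail {ι : Type*} {p f : ι → ℝ} (hp : ∀ i, 0 ≤ p i) {c M : ℝ}
    (hc : 0 ≤ c) (s : Finset ι) (hM : ∀ i ∈ s, f i ≤ M)
    (htail : ∀ i ∈ s, f i * ∑ j ∈ s with f i ≤ f j, p j ≤ c) {u : ℝ} (huM : u ≤ M)
    (hfu : ∀ i ∈ s, u ≤ f i) :
    ∑ i ∈ s, p i * (f i ^ 2 - u ^ 2) ≤ 2 * c * (M - u) := by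
  induction s using Finset.strongInduction generalizing u with
  | H s ih =>
  rcases s.eq_empty_or_nonempty with rfl | hs
  · simpa using mul_nonneg (mul_nonneg zero_le_two hc) (sub_nonneg.2 huM)
  obtain ⟨i₀, hi₀, hmin⟩ := s.exists_min_image f hs
  set t := {i ∈ s | f i₀ < f i}
  have hts : t ⊂ s := filter_ssubset.2 ⟨i₀, hi₀, lt_irrefl _⟩
  have htail_t : ∀ i ∈ t, f i * ∑ j ∈ t with f i ≤ f j, p j ≤ c := by
    intro i hi
    rw [mem_filter] at hi
    rw [filter_filter, filter_congr fun j _ => and_iff_right_of_imp hi.2.trans_le]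
    exact htail i hi.1
  have hrec := ih t hts (fun i hi => hM i (mem_filter.1 hi).1) htail_t (hM i₀ hi₀)
    fun i hi => (mem_filter.1 hi).2.le
  have hsplit : ∑ i ∈ s, p i * (f i ^ 2 - u ^ 2)
      = ∑ i ∈ t, p i * (f i ^ 2 - f i₀ ^ 2) + (f i₀ ^ 2 - u ^ 2) * ∑ i ∈ s, p i := by
    have hdrop : ∑ i ∈ t, p i * (f i ^ 2 - f i₀ ^ 2) = ∑ i ∈ s, p i * (f i ^ 2 - f i₀ ^ 2) :=
      sum_filter_of_ne fun i hi hne =>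
        (hmin i hi).lt_of_ne fun heq => hne (by rw [← heq, sub_self, mul_zero])
    rw [hdrop, mul_sum, ← sum_add_distrib]
    exact sum_congr rfl fun i _ => by ring
  have hmass : f i₀ * ∑ i ∈ s, p i ≤ c := by
    simpa [filter_true_of_mem hmin] using htail i₀ hi₀
  have hstep : (f i₀ ^ 2 - u ^ 2) * ∑ i ∈ s, p i ≤ 2 * c * (f i₀ - u) := by
    have hgap := sub_nonneg.2 (hfu i₀ hi₀)
    nlinarith [mul_le_mul_of_nonneg_left hmass hgap,
      mul_nonneg (sq_nonneg (f i₀ - u)) (sum_nonneg fun i (_ : i ∈ s) => hp i)]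
  linarith

theorem sum_mul_sq_le_of_tail {ι : Type*} [Fintype ι] {p f : ι → ℝ} (hp : ∀ i, 0 ≤ p i)
    (hf : ∀ i, 0 ≤ f i) {c M : ℝ} (hc : 0 ≤ c) (hM₀ : 0 ≤ M) (hM : ∀ i, f i ≤ M)
    (htail : ∀ i, f i * ∑ j with f i ≤ f j, p j ≤ c) :
    ∑ i, p i * f i ^ 2 ≤ 2 * c * M := by
  simpa using sum_mul_sq_sub_sq_le_of_tail hp hc univ (fun i _ => hM i) (fun i _ => htail i)
    hM₀ fun i _ => hf i

/-- Let `U_1,…,U_m` be independent nonnegative random variables on a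
finite probability space (modeled on the product of finite spaces `Ω j` with
distributions `p j`), and let `r_1,…,r_m ≥ 0` with `r = Σ_j r_j`, such that each `U_j`
is bounded by `r` and every attainable value `u` of `U_j` satisfies
`u·Pr(U_j ≥ u) ≤ r_j`.  Then `Var(Σ_j U_j) ≤ 2r²`. -/
theorem variance_sum_le {m : ℕ} (Ω : Fin m → Type*) [∀ j, Fintype (Ω j)]
    (p : ∀ j, Ω j → ℝ) (hp : ∀ j ω, 0 ≤ p j ω) (hpsum : ∀ j, ∑ ω, p j ω = 1)
    (U : ∀ j, Ω j → ℝ) (hU : ∀ j ω, 0 ≤ U j ω)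
    (r : Fin m → ℝ) (hr : ∀ j, 0 ≤ r j)
    (hbound : ∀ j ω, U j ω ≤ ∑ j', r j')
    (hrev : ∀ j ω, U j ω * ∑ ω' ∈ univ.filter (fun ω' => U j ω ≤ U j ω'), p j ω' ≤ r j) :
    ∑ ω : (∀ j, Ω j), (∏ j, p j (ω j)) *
        ((∑ j, U j (ω j)) -
          ∑ ω' : (∀ j, Ω j), (∏ j, p j (ω' j)) * (∑ j, U j (ω' j))) ^ 2
      ≤ 2 * (∑ j, r j) ^ 2 := by
  let _ : ∀ j, MeasurableSpace (Ω j) := fun _ => ⊤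
  set μ := fun j => (PMF.ofFintypeReal (p j) (hp j) (hpsum j)).toMeasure
  set X : Fin m → (∀ j, Ω j) → ℝ := fun j ω => U j (ω j)
  have hindep : Pairwise fun i j => X i ⟂ᵢ[Measure.pi μ] X j := fun i j hij =>
    (iIndepFun_pi fun j => .of_discrete).indepFun hij
  have hsecond : ∀ j, Var[U j; μ j] ≤ 2 * r j * ∑ j', r j' := fun j => calc
    Var[U j; μ j] ≤ (μ j)[U j ^ 2] := variance_le_expectation_sq .of_discrete
    _ = ∑ x, p j x * U j x ^ 2 := PMF.integral_ofFintypeReal _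
    _ ≤ 2 * r j * ∑ j', r j' := sum_mul_sq_le_of_tail (hp j) (hU j) (hr j)
      (sum_nonneg fun j _ => hr j) (hbound j) (hrev j)
  calc _ = Var[∑ j, X j; Measure.pi μ] := by
        rw [variance_eq_integral .of_discrete, integral_pi_ofFintypeReal,
          integral_pi_ofFintypeReal]
        simp [X]
    _ = ∑ j, Var[X j; Measure.pi μ] :=
        IndepFun.variance_sum (fun j _ => .of_discrete) fun i _ j _ hij => hindep hij
    _ = ∑ j, Var[U j; μ j] :=
        sum_congr rfl fun j _ => (measurePreserving_eval μ j).variance_fun_comp .of_discrete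
    _ ≤ ∑ j, 2 * r j * ∑ j', r j' := sum_le_sum fun j _ => hsecond j
    _ = 2 * (∑ j, r j) ^ 2 := by rw [← sum_mul, ← mul_sum]; ring
end

section
/- Let n, n' be positive integers with n ≤ n', and let Z_1,…,Z_{n'} be i.i.d. nonnegative real random variables on a finite probability space. Suppose W_1,…,W_{n'} are i.i.d. random variables with Z_i ≤ W_i pointwise. If (1−ε)·A > E[second-highest of W_1,…,W_{n'}] and A ≤ E[max_{i∈[n]} Z_i], and n/n' = ε/20, then E[max_{i∈[n]} Z_i] ≤ (1/20)·E[max_{i∈[n']} Z_i]. -/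
open scoped Classical
open Finset

lemma aux_sup'_comp_perm {ι β : Type*} [Fintype ι] [SemilatticeSup β]
    (h : (univ : Finset ι).Nonempty) (σ : Equiv.Perm ι) (f : ι → β) :
    univ.sup' h (fun i => f (σ i)) = univ.sup' h f := by
  apply le_antisymm
  · exact Finset.sup'_le _ _ fun i _ => Finset.le_sup' f (mem_univ (σ i))
  · refine Finset.sup'_le _ _ fun i _ => ?_
    have := Finset.le_sup' (fun i => f (σ i)) (mem_univ (σ.symm i))
    simpa using this

lemma aux_sup'_offDiag_comp_perm {ι β : Type*} [Fintype ι] [DecidableEq ι] [SemilatticeSup β]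
    (h : ((univ : Finset ι).offDiag).Nonempty) (σ : Equiv.Perm ι) (f : ι → ι → β) :
    ((univ : Finset ι).offDiag).sup' h (fun p => f (σ p.1) (σ p.2))
      = ((univ : Finset ι).offDiag).sup' h (fun p => f p.1 p.2) := by
  apply le_antisymm
  · refine Finset.sup'_le _ _ fun p hp => ?_
    have hne : σ p.1 ≠ σ p.2 := fun hc => (Finset.mem_offDiag.mp hp).2.2 (σ.injective hc)
    exact Finset.le_sup' (fun p : ι × ι => f p.1 p.2)
      ((Finset.mem_offDiag (x := (σ p.1, σ p.2))).mpr ⟨mem_univ _, mem_univ _, hne⟩)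
  · refine Finset.sup'_le _ _ fun p hp => ?_
    have hne : σ.symm p.1 ≠ σ.symm p.2 :=
      fun hc => (Finset.mem_offDiag.mp hp).2.2 (σ.symm.injective hc)
    have := Finset.le_sup' (fun p : ι × ι => f (σ p.1) (σ p.2))
      ((Finset.mem_offDiag (x := (σ.symm p.1, σ.symm p.2))).mpr
        ⟨mem_univ _, mem_univ _, hne⟩)
    simpa using this

/-- Let `Z_i = z(ω i)` and `W_i = w(ω i)` for `n'` i.i.d. samples
`ω : Fin n' → V` from a distribution `q` on a finite space, where `z` is nonnegative and
`z ≤ w` pointwise.  Suppose `n/n' = ε/20`, `(1 − ε)·A > E[second-highest of W]` and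
`A ≤ E[max_{i∈[n]} Z_i]`.  Then `E[max_{i∈[n]} Z_i] ≤ (1/20)·E[max_{i∈[n']} Z_i]`.
The second-highest of `W` is the largest value of `min (W i) (W j)` over pairs
`i ≠ j`. -/
theorem boost_max_lemma {V : Type*} [Fintype V] (q : V → ℝ)
    (hq : ∀ v, 0 ≤ q v) (hsum : ∑ v, q v = 1)
    (z w : V → ℝ) (hz : ∀ v, 0 ≤ z v) (hzw : ∀ v, z v ≤ w v)
    (ε : ℝ) (hε0 : 0 < ε) (hε1 : ε < 1)
    (n n' : ℕ) (hn : 0 < n) (hnn' : n ≤ n')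
    (hratio : (n : ℝ) / (n' : ℝ) = ε / 20) (A : ℝ)
    (hA : A ≤ ∑ ω : Fin n' → V, (∏ j, q (ω j)) *
        (((univ : Finset (Fin n')).filter (fun j : Fin n' => j.val < n)).sup'
          (by refine ⟨⟨0, lt_of_lt_of_le hn hnn'⟩, ?_⟩; simp [hn]) (fun j => z (ω j))))
    (hvcg : (∑ ω : Fin n' → V, (∏ j, q (ω j)) *
        sSup {x : ℝ | ∃ i j : Fin n', i ≠ j ∧ x = min (w (ω i)) (w (ω j))})
        < (1 - ε) * A) :
    ∑ ω : Fin n' → V, (∏ j, q (ω j)) *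
        (((univ : Finset (Fin n')).filter (fun j : Fin n' => j.val < n)).sup'
          (by refine ⟨⟨0, lt_of_lt_of_le hn hnn'⟩, ?_⟩; simp [hn]) (fun j => z (ω j)))
      ≤ (1 / 20) * ∑ ω : Fin n' → V, (∏ j, q (ω j)) *
          ((univ : Finset (Fin n')).sup'
            (by exact ⟨⟨0, lt_of_lt_of_le hn hnn'⟩, mem_univ _⟩) (fun j => z (ω j))) := by
  classical
  have hn'0 : 0 < n' := lt_of_lt_of_le hn hnn'
  -- n' > 20
  have h20 : (20 : ℝ) < (n' : ℝ) := by
    have hn'R : (0 : ℝ) < (n' : ℝ) := by exact_mod_cast hn'0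
    have h1n : (1 : ℝ) ≤ (n : ℝ) := by exact_mod_cast hn
    have key : (1 : ℝ) / (n' : ℝ) ≤ (n : ℝ) / (n' : ℝ) := by gcongr
    rw [hratio] at key
    have key2 : (1 : ℝ) / (n' : ℝ) < 1 / 20 := by linarith
    exact lt_of_one_div_lt_one_div hn'R (by linarith)
  have hn'2 : 1 < n' := by
    have : (1 : ℝ) < (n' : ℝ) := by linarith
    exact_mod_cast this
  -- basic notation
  have hne1 : (((univ : Finset (Fin n')).filter (fun j : Fin n' => j.val < n))).Nonempty :=
    ⟨⟨0, hn'0⟩, by simp [hn]⟩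
  have hneU : ((univ : Finset (Fin n'))).Nonempty := ⟨⟨0, hn'0⟩, mem_univ _⟩
  have hneD : (((univ : Finset (Fin n'))).offDiag).Nonempty := by
    refine ⟨(⟨0, hn'0⟩, ⟨1, hn'2⟩), Finset.mem_offDiag.mpr ⟨mem_univ _, mem_univ _, ?_⟩⟩
    intro hc
    have := congrArg Fin.val hc
    simpa using this
  set P : (Fin n' → V) → ℝ := fun ω => ∏ j, q (ω j) with hPdef
  set F : (Fin n' → V) → ℝ := fun ω =>
    (((univ : Finset (Fin n')).filter (fun j : Fin n' => j.val < n)).sup' hne1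
      (fun j => z (ω j))) with hFdef
  set M : (Fin n' → V) → ℝ := fun ω =>
    ((univ : Finset (Fin n')).sup' hneU (fun j => z (ω j))) with hMdef
  set G : (Fin n' → V) → ℝ := fun ω =>
    (((univ : Finset (Fin n'))).offDiag.sup' hneD
      (fun p => min (z (ω p.1)) (z (ω p.2)))) with hGdef
  set GW : (Fin n' → V) → ℝ := fun ω =>
    (((univ : Finset (Fin n'))).offDiag.sup' hneD
      (fun p => min (w (ω p.1)) (w (ω p.2)))) with hGWdef
  set χ : Fin n' → (Fin n' → V) → ℝ := fun i ω =>
    if (∀ j, j ≠ i → z (ω j) < z (ω i)) then 1 else 0 with hχdef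
  have hA' : A ≤ ∑ ω : Fin n' → V, P ω * F ω := hA
  show (∑ ω : Fin n' → V, P ω * F ω) ≤ (1 / 20) * ∑ ω : Fin n' → V, P ω * M ω
  have hP0 : ∀ ω, 0 ≤ P ω := fun ω => Finset.prod_nonneg fun j _ => hq _
  have hMz : ∀ ω k, z (ω k) ≤ M ω := fun ω k => Finset.le_sup' (fun j => z (ω j)) (mem_univ k)
  have hGM : ∀ ω, G ω ≤ M ω := fun ω =>
    Finset.sup'_le _ _ fun p _ => le_trans (min_le_left _ _) (hMz ω p.1)
  have hG0 : ∀ ω, 0 ≤ G ω := by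
    intro ω
    obtain ⟨p0, hp0⟩ := hneD
    have h1 : min (z (ω p0.1)) (z (ω p0.2)) ≤ G ω :=
      Finset.le_sup' (fun p : Fin n' × Fin n' => min (z (ω p.1)) (z (ω p.2))) hp0
    exact le_trans (le_min (hz _) (hz _)) h1
  have hGGW : ∀ ω, G ω ≤ GW ω := by
    intro ω
    rw [hGdef, hGWdef]
    dsimp only
    refine Finset.sup'_le _ _ fun p hp => ?_
    exact le_trans (min_le_min (hzw _) (hzw _))
      (Finset.le_sup' (fun p : Fin n' × Fin n' => min (w (ω p.1)) (w (ω p.2))) hp)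
  have hFM : ∀ ω, F ω ≤ M ω := fun ω =>
    Finset.sup'_le _ _ fun j _ => Finset.le_sup' (fun j => z (ω j)) (mem_univ j)
  have hχ0 : ∀ i ω, 0 ≤ χ i ω := by
    intro i ω; rw [hχdef]; dsimp only; split <;> norm_num
  -- identify the sSup with GW
  have hsSup : ∀ ω : Fin n' → V,
      sSup {x : ℝ | ∃ i j : Fin n', i ≠ j ∧ x = min (w (ω i)) (w (ω j))} = GW ω := by
    intro ω
    rw [hGWdef]
    dsimp only
    rw [Finset.sup'_eq_csSup_image]
    congr 1
    ext x
    constructor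
    · rintro ⟨i, j, hij, rfl⟩
      exact ⟨(i, j), Finset.mem_coe.mpr
        ((Finset.mem_offDiag (x := (i, j))).mpr ⟨mem_univ _, mem_univ _, hij⟩), rfl⟩
    · rintro ⟨p, hp, rfl⟩
      have hmem := Finset.mem_offDiag.mp (Finset.mem_coe.mp hp)
      exact ⟨p.1, p.2, hmem.2.2, rfl⟩
  -- pointwise key inequality
  set T : Finset (Fin n') := (univ : Finset (Fin n')).filter (fun j : Fin n' => j.val < n)
    with hTdef
  have hkey : ∀ ω, F ω ≤ G ω + ∑ i ∈ T, χ i ω * (M ω - G ω) := by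
    intro ω
    by_cases h : ∃ i ∈ T, ∀ j, j ≠ i → z (ω j) < z (ω i)
    · obtain ⟨i, hi, hEi⟩ := h
      have h1 : χ i ω * (M ω - G ω) ≤ ∑ k ∈ T, χ k ω * (M ω - G ω) :=
        Finset.single_le_sum
          (fun k _ => mul_nonneg (hχ0 k ω) (sub_nonneg.mpr (hGM ω))) hi
      have h2 : χ i ω = 1 := by rw [hχdef]; exact if_pos hEi
      have h3 : F ω ≤ M ω := hFM ω
      rw [h2] at h1
      linarith
    · push_neg at h
      have hzero : ∑ i ∈ T, χ i ω * (M ω - G ω) = 0 := by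
        refine Finset.sum_eq_zero fun i hi => ?_
        have : χ i ω = 0 := by
          rw [hχdef]
          refine if_neg fun hc => ?_
          obtain ⟨j, hji, hle⟩ := h i hi
          exact absurd (hc j hji) (not_lt.mpr hle)
        rw [this, zero_mul]
      rw [hzero, add_zero]
      obtain ⟨i₀, hi₀, hFeq⟩ := Finset.exists_mem_eq_sup' hne1 (fun j => z (ω j))
      obtain ⟨j, hji, hle⟩ := h i₀ hi₀
      calc F ω = z (ω i₀) := hFeq
        _ = min (z (ω i₀)) (z (ω j)) := (min_eq_left hle).symm
        _ ≤ G ω := Finset.le_sup' (fun p : Fin n' × Fin n' => min (z (ω p.1)) (z (ω p.2)))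
            ((Finset.mem_offDiag (x := (i₀, j))).mpr ⟨mem_univ _, mem_univ _, Ne.symm hji⟩)
  -- at most one strict argmax
  have hdisj : ∀ ω, ∑ i : Fin n', χ i ω ≤ 1 := by
    intro ω
    by_cases h : ∃ i : Fin n', ∀ j, j ≠ i → z (ω j) < z (ω i)
    · obtain ⟨i, hEi⟩ := h
      have heq : ∑ k : Fin n', χ k ω = χ i ω := by
        refine Finset.sum_eq_single i (fun k _ hk => ?_) (fun h => absurd (mem_univ i) h)
        rw [hχdef]
        refine if_neg fun hc => ?_
        exact absurd (hEi k hk) (not_lt.mpr (le_of_lt (hc i (Ne.symm hk))))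
      rw [heq, hχdef]
      dsimp only; split <;> norm_num
    · push_neg at h
      have : ∑ k : Fin n', χ k ω = 0 := by
        refine Finset.sum_eq_zero fun i _ => ?_
        rw [hχdef]
        refine if_neg fun hc => ?_
        obtain ⟨j, hji, hle⟩ := h i
        exact absurd (hc j hji) (not_lt.mpr hle)
      rw [this]; norm_num
  -- exchangeability
  set S : Fin n' → ℝ := fun i => ∑ ω : Fin n' → V, P ω * (χ i ω * (M ω - G ω)) with hSdef
  have hexch : ∀ i k : Fin n', S i = S k := by
    intro i k
    set σ : Equiv.Perm (Fin n') := Equiv.swap i k with hσdef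
    have hinv : Function.Involutive (fun ω : Fin n' → V => ω ∘ σ) := by
      intro ω
      funext j
      simp [hσdef, Function.comp, Equiv.swap_apply_self]
    rw [hSdef]
    dsimp only
    refine Fintype.sum_bijective (fun ω : Fin n' → V => ω ∘ σ) hinv.bijective _ _ fun ω => ?_
    have hPe : P (ω ∘ σ) = P ω := by
      rw [hPdef]
      exact Equiv.prod_comp σ (fun j => q (ω j))
    have hMe : M (ω ∘ σ) = M ω := by
      rw [hMdef]
      exact aux_sup'_comp_perm hneU σ (fun j => z (ω j))
    have hGe : G (ω ∘ σ) = G ω := by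
      rw [hGdef]
      exact aux_sup'_offDiag_comp_perm hneD σ (fun a b => min (z (ω a)) (z (ω b)))
    have hχe : χ k (ω ∘ σ) = χ i ω := by
      rw [hχdef]
      dsimp only
      have hcond : (∀ j, j ≠ k → z ((ω ∘ σ) j) < z ((ω ∘ σ) k)) ↔
          (∀ j, j ≠ i → z (ω j) < z (ω i)) := by
        have hσk : σ k = i := Equiv.swap_apply_right i k
        constructor
        · intro hh j hj
          have hne : σ j ≠ k := by
            intro hc
            apply hj
            have := congrArg σ hc
            rwa [Equiv.swap_apply_self, hσk] at this
          have := hh (σ j) hne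
          simpa [hσdef, Function.comp, Equiv.swap_apply_self, Equiv.swap_apply_right]
            using this
        · intro hh j hj
          have hne : σ j ≠ i := by
            intro hc
            apply hj
            exact σ.injective (by rw [hc, hσk])
          have := hh (σ j) hne
          simpa [Function.comp, hσk] using this
      exact if_congr hcond rfl rfl
    rw [hPe, hMe, hGe, hχe]
  -- cardinality of T
  have hcard : T.card = n := by
    have hTeq : T = Finset.map (Fin.castLEEmb hnn') univ := by
      ext j
      simp only [hTdef, Finset.mem_filter, mem_univ, true_and, Finset.mem_map,
        Fin.castLEEmb, Function.Embedding.coeFn_mk]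
      constructor
      · intro hj
        exact ⟨⟨j.val, hj⟩, by simp [Fin.castLE]⟩
      · rintro ⟨a, rfl⟩
        exact a.isLt
    rw [hTeq, Finset.card_map, Finset.card_univ, Fintype.card_fin]
  set i₀ : Fin n' := ⟨0, hn'0⟩ with hi₀def
  have hS0 : 0 ≤ S i₀ := by
    rw [hSdef]
    exact Finset.sum_nonneg fun ω _ =>
      mul_nonneg (hP0 ω) (mul_nonneg (hχ0 i₀ ω) (sub_nonneg.mpr (hGM ω)))
  -- main estimate 1
  have hsum1 : ∑ ω : Fin n' → V, P ω * F ω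
      ≤ (∑ ω : Fin n' → V, P ω * G ω) + (n : ℝ) * S i₀ := by
    have step1 : ∑ ω : Fin n' → V, P ω * F ω
        ≤ ∑ ω : Fin n' → V, P ω * (G ω + ∑ i ∈ T, χ i ω * (M ω - G ω)) :=
      Finset.sum_le_sum fun ω _ => mul_le_mul_of_nonneg_left (hkey ω) (hP0 ω)
    have step2 : ∑ ω : Fin n' → V, P ω * (G ω + ∑ i ∈ T, χ i ω * (M ω - G ω))
        = (∑ ω : Fin n' → V, P ω * G ω) + ∑ i ∈ T, S i := by
      simp only [mul_add, Finset.mul_sum, hSdef]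
      rw [Finset.sum_add_distrib, Finset.sum_comm]
    have step3 : ∑ i ∈ T, S i = (n : ℝ) * S i₀ := by
      rw [Finset.sum_congr rfl (fun i _ => hexch i i₀), Finset.sum_const, hcard,
        nsmul_eq_mul]
    linarith
  -- main estimate 2
  have hsum2 : (n' : ℝ) * S i₀ ≤ ∑ ω : Fin n' → V, P ω * M ω := by
    have e1 : (n' : ℝ) * S i₀ = ∑ i : Fin n', S i := by
      rw [Finset.sum_congr rfl (fun i _ => hexch i i₀), Finset.sum_const,
        Finset.card_univ, Fintype.card_fin, nsmul_eq_mul]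
    have e2 : ∑ i : Fin n', S i
        = ∑ ω : Fin n' → V, P ω * ((∑ i : Fin n', χ i ω) * (M ω - G ω)) := by
      rw [hSdef]
      rw [Finset.sum_comm]
      refine Finset.sum_congr rfl fun ω _ => ?_
      rw [Finset.sum_mul, Finset.mul_sum]
    have e3 : ∑ ω : Fin n' → V, P ω * ((∑ i : Fin n', χ i ω) * (M ω - G ω))
        ≤ ∑ ω : Fin n' → V, P ω * M ω := by
      refine Finset.sum_le_sum fun ω _ => mul_le_mul_of_nonneg_left ?_ (hP0 ω)
      have h1 : (∑ i : Fin n', χ i ω) * (M ω - G ω) ≤ 1 * (M ω - G ω) :=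
        mul_le_mul_of_nonneg_right (hdisj ω) (sub_nonneg.mpr (hGM ω))
      have h2 : 0 ≤ G ω := hG0 ω
      linarith
    rw [e1, e2]; exact e3
  -- plug in the ratio
  have hn'ne : (n' : ℝ) ≠ 0 := by
    have : (0 : ℝ) < (n' : ℝ) := by exact_mod_cast hn'0
    linarith
  have hnval : (n : ℝ) = ε / 20 * (n' : ℝ) := by
    rw [div_eq_iff hn'ne] at hratio
    linarith
  have hnS : (n : ℝ) * S i₀ ≤ ε / 20 * ∑ ω : Fin n' → V, P ω * M ω := by
    calc (n : ℝ) * S i₀ = ε / 20 * ((n' : ℝ) * S i₀) := by rw [hnval]; ring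
      _ ≤ ε / 20 * ∑ ω : Fin n' → V, P ω * M ω :=
        mul_le_mul_of_nonneg_left hsum2 (by positivity)
  have hEG : ∑ ω : Fin n' → V, P ω * G ω ≤ ∑ ω : Fin n' → V, P ω * GW ω :=
    Finset.sum_le_sum fun ω _ => mul_le_mul_of_nonneg_left (hGGW ω) (hP0 ω)
  have hvcg' : ∑ ω : Fin n' → V, P ω * GW ω < (1 - ε) * A := by
    have hre : (∑ ω : Fin n' → V, P ω *
        sSup {x : ℝ | ∃ i j : Fin n', i ≠ j ∧ x = min (w (ω i)) (w (ω j))})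
        = ∑ ω : Fin n' → V, P ω * GW ω :=
      Finset.sum_congr rfl fun ω _ => by rw [hsSup ω]
    rw [← hre]
    exact hvcg
  have hAX : (1 - ε) * A ≤ (1 - ε) * ∑ ω : Fin n' → V, P ω * F ω :=
    mul_le_mul_of_nonneg_left hA' (by linarith)
  have final : ε * (∑ ω : Fin n' → V, P ω * F ω)
      < ε * (1 / 20 * ∑ ω : Fin n' → V, P ω * M ω) := by
    nlinarith [hsum1, hnS, hEG, hvcg', hAX]
  exact le_of_lt ((mul_lt_mul_iff_right₀ hε0).mp final)
end

section
/- For i.i.d. real random variables x_1,…,x_k on a finite probability space, E[max_{i∈[n]} x_i | tb(x) ∈ [n]] = E[max_{i∈[k]} x_i | tb(x) ∈ [n]] = E[max_{i∈[k]} x_i], where n ≤ k and tb(x) is the uniformly-tie-broken argmax. -/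
/-!
Let `M` be a symmetric function of the sample. Since the sample is exchangeable and the
tie-breaking rule commutes with permutations, `E[M; tb = i]` does not depend on `i`; as the
tie-breaking probabilities sum to one, it equals `E[M] / k`. Taking `M = 1` and `M = max` gives
`P[tb ∈ [n]] = n / k` and `E[max; tb ∈ [n]] = (n / k) E[max]`, whence the second equality. The
first holds pointwise: whenever `tb ∈ [n]` has positive probability given `v`, some maximiser
of `v` lies among the first `n` coordinates.
-/

open scoped Classical
open Finset

/-- The conditional probability, given the sample `v`, that the uniformly-tie-broken
argmax `tb(v)` lies among the first `n` coordinates. -/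
noncomputable def tbFirst (k n : ℕ) (v : Fin k → ℝ) : ℝ :=
  ∑ i ∈ (univ : Finset (Fin k)).filter (fun i : Fin k => i.val < n),
    (if ∀ j, v j ≤ v i then
        1 / (((univ : Finset (Fin k)).filter (fun j => v j = v i)).card : ℝ)
      else 0)

lemma sup'_univ_comp_perm {ι α : Type*} [Fintype ι] [LinearOrder α]
    (h : (univ : Finset ι).Nonempty) (σ : Equiv.Perm ι) (f : ι → α) :
    univ.sup' h (f ∘ σ) = univ.sup' h f :=
  (sup'_comp_eq_map (f := σ.toEmbedding) f h).trans
    (sup'_congr _ (map_univ_equiv σ) fun _ _ => rfl)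

section TieBreak

variable {ι : Type*} [Fintype ι]

/-- The probability `P[tb(v) = i]` that the uniformly tie-broken argmax of `v` is `i`. -/
noncomputable def tieBreakProb (i : ι) (v : ι → ℝ) : ℝ :=
  if ∀ j, v j ≤ v i then 1 / ((univ : Finset ι).filter (fun j => v j = v i)).card else 0

lemma sum_tieBreakProb [Nonempty ι] (v : ι → ℝ) : ∑ i, tieBreakProb i v = 1 := by
  set A : Finset ι := univ.filter (fun i => ∀ j, v j ≤ v i)
  have hA : A.Nonempty := by
    obtain ⟨i, hi⟩ := Finite.exists_max v
    exact ⟨i, by simpa [A] using hi⟩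
  have hlevel : ∀ i ∈ A, univ.filter (fun j => v j = v i) = A := by
    intro i hi
    simp only [A, mem_filter, mem_univ, true_and] at hi
    ext j
    simp only [A, mem_filter, mem_univ, true_and]
    exact ⟨fun h l => h ▸ hi l, fun h => le_antisymm (hi j) (h i)⟩
  calc ∑ i, tieBreakProb i v = ∑ i ∈ A, 1 / ((univ.filter (fun j => v j = v i)).card : ℝ) := by
        rw [sum_filter]; rfl
    _ = ∑ _i ∈ A, 1 / (A.card : ℝ) := sum_congr rfl fun i hi => by rw [hlevel i hi]
    _ = 1 := by
        rw [sum_const, nsmul_eq_mul]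
        have : (A.card : ℝ) ≠ 0 := by exact_mod_cast hA.card_pos.ne'
        field_simp

lemma forall_le_of_tieBreakProb_ne_zero {i : ι} {v : ι → ℝ} (h : tieBreakProb i v ≠ 0) :
    ∀ j, v j ≤ v i := by
  by_contra hmax
  exact h (if_neg hmax)

lemma tieBreakProb_comp_perm (σ : Equiv.Perm ι) (i : ι) (v : ι → ℝ) :
    tieBreakProb i (v ∘ σ) = tieBreakProb (σ i) v := by
  have hmax : (∀ j, v (σ j) ≤ v (σ i)) ↔ ∀ j, v j ≤ v (σ i) :=
    σ.forall_congr fun _ => Iff.rfl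
  have hcard : (univ.filter (fun j => v (σ j) = v (σ i))).card
      = (univ.filter (fun j => v j = v (σ i))).card :=
    card_equiv σ (by simp)
  simp only [tieBreakProb, Function.comp_apply, hmax, hcard]

lemma sum_tieBreakProb_mul_sup'_eq {s : Finset ι} (hs : s.Nonempty) (v : ι → ℝ) :
    (∑ i ∈ s, tieBreakProb i v) * s.sup' hs v
      = (∑ i ∈ s, tieBreakProb i v) * univ.sup' (hs.mono s.subset_univ) v := by
  by_cases hzero : ∑ i ∈ s, tieBreakProb i v = 0
  · simp only [hzero, zero_mul]
  obtain ⟨i, hi, hpos⟩ := exists_ne_zero_of_sum_ne_zero hzero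
  have hmax := forall_le_of_tieBreakProb_ne_zero hpos
  have hsup : ∀ (t : Finset ι) (ht : t.Nonempty), i ∈ t → t.sup' ht v = v i :=
    fun t ht hit => le_antisymm (sup'_le _ _ fun j _ => hmax j) (le_sup' v hit)
  rw [hsup s hs hi, hsup univ _ (mem_univ i)]

section IID

variable [DecidableEq ι] (S : Finset ℝ) (q : ℝ → ℝ)

lemma sum_piFinset_prod_mul_comp_perm (σ : Equiv.Perm ι) (F : (ι → ℝ) → ℝ) :
    ∑ v ∈ Fintype.piFinset (fun _ : ι => S), (∏ j, q (v j)) * F (v ∘ σ)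
      = ∑ v ∈ Fintype.piFinset (fun _ : ι => S), (∏ j, q (v j)) * F v := by
  refine sum_nbij' (· ∘ σ) (· ∘ σ.symm) ?_ ?_ ?_ ?_ ?_
  · simp +contextual [Fintype.mem_piFinset]
  · simp +contextual [Fintype.mem_piFinset]
  · intro v _; ext; simp
  · intro v _; ext; simp
  · intro v _
    rw [← Equiv.prod_comp σ (fun j => q (v j))]
    rfl

variable {S q} {M : (ι → ℝ) → ℝ}

lemma sum_piFinset_prod_mul_tieBreakProb_mul (hM : ∀ (σ : Equiv.Perm ι) v, M (v ∘ σ) = M v)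
    (i : ι) :
    ∑ v ∈ Fintype.piFinset (fun _ : ι => S), (∏ j, q (v j)) * tieBreakProb i v * M v
      = (∑ v ∈ Fintype.piFinset (fun _ : ι => S), (∏ j, q (v j)) * M v) / Fintype.card ι := by
  set T : ι → ℝ := fun i' =>
    ∑ v ∈ Fintype.piFinset (fun _ : ι => S), (∏ j, q (v j)) * tieBreakProb i' v * M v
  have hswap : ∀ i', T i' = T i := by
    intro i'
    have := sum_piFinset_prod_mul_comp_perm S q (Equiv.swap i' i)
      (fun v => tieBreakProb i' v * M v)
    simp only [tieBreakProb_comp_perm, hM, Equiv.swap_apply_left] at this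
    simpa only [T, mul_assoc] using this.symm
  have htotal : ∑ i', T i' = ∑ v ∈ Fintype.piFinset (fun _ : ι => S), (∏ j, q (v j)) * M v := by
    have : Nonempty ι := ⟨i⟩
    simp only [T]
    rw [sum_comm]
    refine sum_congr rfl fun v _ => ?_
    rw [← sum_mul, ← mul_sum, sum_tieBreakProb, mul_one]
  have hcard : (Fintype.card ι : ℝ) ≠ 0 := by
    have : Nonempty ι := ⟨i⟩
    exact_mod_cast Fintype.card_ne_zero
  change T i = _
  rw [← htotal, sum_congr rfl fun i' _ => hswap i', sum_const, card_univ, nsmul_eq_mul]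
  field_simp

lemma sum_piFinset_prod_mul_sum_tieBreakProb_mul
    (hM : ∀ (σ : Equiv.Perm ι) v, M (v ∘ σ) = M v) (s : Finset ι) :
    ∑ v ∈ Fintype.piFinset (fun _ : ι => S), (∏ j, q (v j)) * (∑ i ∈ s, tieBreakProb i v) * M v
      = s.card / Fintype.card ι
          * ∑ v ∈ Fintype.piFinset (fun _ : ι => S), (∏ j, q (v j)) * M v := by
  have hexpand : ∀ v : ι → ℝ, (∏ j, q (v j)) * (∑ i ∈ s, tieBreakProb i v) * M v
      = ∑ i ∈ s, (∏ j, q (v j)) * tieBreakProb i v * M v := fun v => by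
    rw [mul_sum, sum_mul]
  rw [sum_congr rfl fun v _ => hexpand v, sum_comm,
    sum_congr rfl fun i _ => sum_piFinset_prod_mul_tieBreakProb_mul hM i, sum_const, nsmul_eq_mul]
  ring

end IID

end TieBreak

lemma tbFirst_eq_sum_tieBreakProb (k n : ℕ) (v : Fin k → ℝ) :
    tbFirst k n v = ∑ i ∈ univ.filter (fun i : Fin k => i.val < n), tieBreakProb i v := by
  unfold tbFirst tieBreakProb
  congr!

/-- For `k` i.i.d. samples `v : Fin k → ℝ` from a distribution `q` on
a finite set `S ⊆ ℝ`, with `tb(v)` the uniformly-tie-broken argmax and `n ≤ k`: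
`E[max_{i∈[n]} v_i  | tb(v) ∈ [n]] = E[max_{i∈[k]} v_i | tb(v) ∈ [n]]
  = E[max_{i∈[k]} v_i]`. -/
theorem conditional_max_eq (k n : ℕ) (hn : 0 < n) (hnk : n ≤ k)
    (S : Finset ℝ)
    (q : ℝ → ℝ) (hsum : ∑ x ∈ S, q x = 1) :
    (∑ v ∈ Fintype.piFinset (fun _ : Fin k => S),
          (∏ j, q (v j)) * tbFirst k n v *
            (((univ : Finset (Fin k)).filter (fun j : Fin k => j.val < n)).sup'
              (by refine ⟨⟨0, lt_of_lt_of_le hn hnk⟩, ?_⟩; simp [hn]) v)) /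
        (∑ v ∈ Fintype.piFinset (fun _ : Fin k => S),
          (∏ j, q (v j)) * tbFirst k n v)
      = (∑ v ∈ Fintype.piFinset (fun _ : Fin k => S),
            (∏ j, q (v j)) * tbFirst k n v *
              ((univ : Finset (Fin k)).sup'
                (by exact ⟨⟨0, lt_of_lt_of_le hn hnk⟩, mem_univ _⟩) v)) /
          (∑ v ∈ Fintype.piFinset (fun _ : Fin k => S),
            (∏ j, q (v j)) * tbFirst k n v)
    ∧ (∑ v ∈ Fintype.piFinset (fun _ : Fin k => S),
            (∏ j, q (v j)) * tbFirst k n v *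
              ((univ : Finset (Fin k)).sup'
                (by exact ⟨⟨0, lt_of_lt_of_le hn hnk⟩, mem_univ _⟩) v)) /
          (∑ v ∈ Fintype.piFinset (fun _ : Fin k => S),
            (∏ j, q (v j)) * tbFirst k n v)
        = ∑ v ∈ Fintype.piFinset (fun _ : Fin k => S),
            (∏ j, q (v j)) *
              ((univ : Finset (Fin k)).sup'
                (by exact ⟨⟨0, lt_of_lt_of_le hn hnk⟩, mem_univ _⟩) v) := by
  have hne : (univ : Finset (Fin k)).Nonempty := ⟨⟨0, by omega⟩, mem_univ _⟩
  have hn0 : (n : ℝ) ≠ 0 := by positivity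
  have hk0 : (k : ℝ) ≠ 0 := by
    have : 0 < k := by omega
    positivity
  have hcard : #(univ.filter (fun j : Fin k => j.val < n)) = n := by
    rw [Fin.card_filter_val_lt, min_eq_right hnk]
  have hmass : ∑ v ∈ Fintype.piFinset (fun _ : Fin k => S), ∏ j, q (v j) = 1 := by
    rw [← prod_univ_sum]
    simp [hsum]
  have hden := sum_piFinset_prod_mul_sum_tieBreakProb_mul (S := S) (q := q) (M := fun _ => 1)
    (fun _ _ => rfl) (univ.filter (fun j : Fin k => j.val < n))
  have hnum := sum_piFinset_prod_mul_sum_tieBreakProb_mul (S := S) (q := q)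
    (M := fun v => univ.sup' hne v) (fun σ v => sup'_univ_comp_perm hne σ v)
    (univ.filter (fun j : Fin k => j.val < n))
  simp only [mul_one, hmass, hcard, Fintype.card_fin] at hden hnum
  simp only [tbFirst_eq_sum_tieBreakProb]
  refine ⟨?_, ?_⟩
  · congr 1
    refine sum_congr rfl fun v _ => ?_
    rw [mul_assoc, mul_assoc]
    exact congrArg _ (sum_tieBreakProb_mul_sup'_eq _ v)
  · rw [hnum, hden]
    field_simp
end

section
/- Let V_j ⊆ ℝ≥0 be finite with distribution D_j, and φ_j(x) = x if x = max V_j, else x − (succ(x) − x)·(1 − F_j(x))/f_j(x). Then for every x ∈ V_j, Σ_{y ∈ V_j, y ≥ x} f_j(y)·φ_j(y) = x·Pr_{y∼D_j}(y ≥ x). -/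
open scoped Classical
open Finset

lemma virt_aux (V : Finset ℝ) (f : ℝ → ℝ) (hf : ∀ x ∈ V, 0 < f x) :
    ∀ n x, x ∈ V → (V.filter (fun y => x < y)).card = n →
    ∑ y ∈ V.filter (fun y => x ≤ y), f y * virtVal V f y
      = x * ∑ y ∈ V.filter (fun y => x ≤ y), f y := by
  intro n
  induction n using Nat.strong_induction_on with
  | _ n IH =>
    intro x hx hcard
    have hsplit : V.filter (fun y => x ≤ y) = insert x (V.filter (fun y => x < y)) := by
      ext y
      simp only [Finset.mem_filter, Finset.mem_insert]
      constructor
      · rintro ⟨hy, hxy⟩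
        rcases eq_or_lt_of_le hxy with h | h
        · exact Or.inl h.symm
        · exact Or.inr ⟨hy, h⟩
      · rintro (rfl | ⟨hy, hxy⟩)
        · exact ⟨hx, le_refl _⟩
        · exact ⟨hy, le_of_lt hxy⟩
    have hnotmem : x ∉ V.filter (fun y => x < y) := by simp
    rw [hsplit, Finset.sum_insert hnotmem, Finset.sum_insert hnotmem]
    by_cases h : (V.filter (fun y => x < y)).Nonempty
    · set x' := (V.filter (fun y => x < y)).min' h with hx'def
      have hx'mem := (V.filter (fun y => x < y)).min'_mem h
      rw [Finset.mem_filter] at hx'mem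
      obtain ⟨hx'V, hxx'⟩ := hx'mem
      have hfilter_eq : V.filter (fun y => x < y) = V.filter (fun y => x' ≤ y) := by
        ext y
        simp only [Finset.mem_filter]
        constructor
        · rintro ⟨hy, hxy⟩
          exact ⟨hy, Finset.min'_le _ _ (Finset.mem_filter.mpr ⟨hy, hxy⟩)⟩
        · rintro ⟨hy, hxy⟩
          exact ⟨hy, lt_of_lt_of_le hxx' hxy⟩
      have hss : V.filter (fun y => x' < y) ⊂ V.filter (fun y => x < y) := by
        constructor
        · intro y hy
          rw [Finset.mem_filter] at hy ⊢
          exact ⟨hy.1, lt_trans hxx' hy.2⟩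
        · intro hc
          have := hc (Finset.mem_filter.mpr ⟨hx'V, hxx'⟩)
          rw [Finset.mem_filter] at this
          exact lt_irrefl _ this.2
      have hsub : (V.filter (fun y => x' < y)).card < n := by
        rw [← hcard]; exact Finset.card_lt_card hss
      have hIH := IH _ hsub x' hx'V rfl
      calc f x * virtVal V f x + ∑ y ∈ V.filter (fun y => x < y), f y * virtVal V f y
          = f x * virtVal V f x
              + ∑ y ∈ V.filter (fun y => x' ≤ y), f y * virtVal V f y := by
            rw [hfilter_eq]
        _ = f x * virtVal V f x + x' * ∑ y ∈ V.filter (fun y => x' ≤ y), f y := by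
            rw [hIH]
        _ = x * (f x + ∑ y ∈ V.filter (fun y => x < y), f y) := by
            rw [virtVal, dif_pos h, ← hx'def, hfilter_eq]
            have hfx := (hf x hx).ne'
            field_simp
            ring
    · rw [Finset.not_nonempty_iff_eq_empty] at h
      simp only [virtVal, h, Finset.not_nonempty_empty, dif_neg, not_false_iff]
      simp [h]
      ring

/-- (Discrete Myerson identity.)  For a distribution `f` with finite
support `V ⊆ ℝ≥0` and every `x ∈ V`,
`Σ_{y ∈ V, y ≥ x} f(y)·φ(y) = x·Pr_{y∼f}(y ≥ x)`. -/
theorem virtual_value_above_threshold (V : Finset ℝ) (hV : V.Nonempty)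
    (hVpos : ∀ x ∈ V, 0 ≤ x)
    (f : ℝ → ℝ) (hf : ∀ x ∈ V, 0 < f x) (hsum : ∑ x ∈ V, f x = 1)
    (x : ℝ) (hx : x ∈ V) :
    ∑ y ∈ V.filter (fun y => x ≤ y), f y * virtVal V f y
      = x * ∑ y ∈ V.filter (fun y => x ≤ y), f y :=
  virt_aux V f hf _ x hx rfl
end
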